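/- Let k be a field of characteristic different from 2 and 3, set j(z) = 4(z²−z+1)³/(27 z²(z−1)²) for z ∉ {0,1}, and for w ∉ {−1, 2, 1/2} set w° = (2−w)/(1+w). Let τ(x,y) = ((2y−x)/(y−x+1), y/(y−x+1)). Let r, s ∈ k with r, s ∉ {0, 1, −1, 2, 1/2}, j(r) ≠ 1 and j(s) ≠ 1, and put x = j(r)+j(s), y = j(r)·j(s). Then y − x + 1 = (j(r)−1)(j(s)−1) ≠ 0, and τ(x, y) = (j(r°) + j(s°), j(r°)·j(s°)). Moreover, j(r°) = j(r)/(j(r)−1). -/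
import Mathlib

/-- The `j`-function of a cross-ratio: `j(z) = 4(z²−z+1)³ / (27 z²(z−1)²)`. -/
def jfun {k : Type*} [Field k] (z : k) : k :=
  4 * (z ^ 2 - z + 1) ^ 3 / (27 * z ^ 2 * (z - 1) ^ 2)

/-- The involutive operation `w° = (2−w)/(1+w)`. -/
def circOp {k : Type*} [Field k] (w : k) : k := (2 - w) / (1 + w)

/-- The involution associated to the Pappus–Steiner map:
`τ(x,y) = ((2y−x)/(y−x+1), y/(y−x+1))`. -/
def tauInv {k : Type*} [Field k] (z : k × k) : k × k :=
  ((2 * z.2 - z.1) / (z.2 - z.1 + 1), z.2 / (z.2 - z.1 + 1))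

private lemma jcirc {k : Type*} [Field k] (h2 : (2:k) ≠ 0) (h3 : (3:k) ≠ 0)
    (z : k) (hz0 : z ≠ 0) (hz1 : z ≠ 1) (hzm1 : z ≠ -1) (hz2 : z ≠ 2) (hzh : z ≠ 1/2) :
    jfun (circOp z) = jfun z / (jfun z - 1) := by
  have h1z : 1 + z ≠ 0 := fun h => hzm1 (by linear_combination h)
  have h2z : 2 - z ≠ 0 := fun h => hz2 (by linear_combination -h)
  have h12 : 1 - 2*z ≠ 0 := by
    intro h; apply hzh; field_simp; linear_combination -h
  have hz1' : z - 1 ≠ 0 := sub_ne_zero.mpr hz1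
  have h27 : (27:k) ≠ 0 := by
    have : (27:k) = 3^3 := by norm_num
    rw [this]; exact pow_ne_zero _ h3
  have hden : 27 * z^2 * (z-1)^2 ≠ 0 :=
    mul_ne_zero (mul_ne_zero h27 (pow_ne_zero _ hz0)) (pow_ne_zero _ hz1')
  have hq : 2*z^3 - 3*z^2 - 3*z + 2 ≠ 0 := by
    intro h
    exact mul_ne_zero (mul_ne_zero h1z h2z) h12 (by linear_combination h)
  have hkey : jfun z - 1 = (2*z^3 - 3*z^2 - 3*z + 2)^2 / (27 * z^2 * (z-1)^2) := by
    unfold jfun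
    field_simp
    ring
  have step : jfun z / (jfun z - 1)
      = 4*(z^2-z+1)^3 / (2*z^3-3*z^2-3*z+2)^2 := by
    rw [hkey]
    unfold jfun
    rw [div_div_div_eq]
    rw [div_eq_div_iff (mul_ne_zero hden (pow_ne_zero _ hq)) (pow_ne_zero _ hq)]
    ring
  rw [step]
  have hc0 : circOp z ≠ 0 := div_ne_zero h2z h1z
  have hc1 : circOp z - 1 ≠ 0 := by
    rw [show circOp z - 1 = (1-2*z)/(1+z) by
      unfold circOp; field_simp; ring]
    exact div_ne_zero h12 h1z
  have hD : 27 * circOp z ^ 2 * (circOp z - 1) ^ 2 ≠ 0 :=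
    mul_ne_zero (mul_ne_zero h27 (pow_ne_zero _ hc0)) (pow_ne_zero _ hc1)
  have e1 : circOp z ^ 2 - circOp z + 1 = 3*(z^2-z+1)/(1+z)^2 := by
    unfold circOp
    field_simp
    ring
  have e2 : circOp z - 1 = (1-2*z)/(1+z) := by
    unfold circOp
    field_simp
    ring
  have e0 : circOp z ^ 2 = (2-z)^2/(1+z)^2 := by
    unfold circOp; rw [div_pow]
  unfold jfun
  rw [div_eq_div_iff hD (pow_ne_zero _ hq)]
  rw [e1, e2, e0]
  field_simp
  ring

/-- The involution `τ` acts on signatures as the operation `r ↦ r°` on cross-ratios,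
and `j(r°) = j(r)/(j(r) − 1)`. -/
theorem tau_circ_cross_ratio {k : Type*} [Field k]
    (hchar2 : ringChar k ≠ 2) (hchar3 : ringChar k ≠ 3)
    (r s : k)
    (hr0 : r ≠ 0) (hr1 : r ≠ 1) (hrm1 : r ≠ -1) (hr2 : r ≠ 2) (hrh : r ≠ 1 / 2)
    (hs0 : s ≠ 0) (hs1 : s ≠ 1) (hsm1 : s ≠ -1) (hs2 : s ≠ 2) (hsh : s ≠ 1 / 2)
    (hjr : jfun r ≠ 1) (hjs : jfun s ≠ 1)
    (x y : k) (hx : x = jfun r + jfun s) (hy : y = jfun r * jfun s) :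
    y - x + 1 = (jfun r - 1) * (jfun s - 1) ∧
    y - x + 1 ≠ 0 ∧
    tauInv (x, y) = (jfun (circOp r) + jfun (circOp s), jfun (circOp r) * jfun (circOp s)) ∧
    jfun (circOp r) = jfun r / (jfun r - 1) := by
  have h2 : (2:k) ≠ 0 := Ring.two_ne_zero hchar2
  have h3 : (3:k) ≠ 0 := by
    intro h
    have h3' : (ringChar k) ∣ 3 := (ringChar.spec k 3).mp (by exact_mod_cast h)
    rcases (Nat.prime_three).eq_one_or_self_of_dvd _ h3' with h1 | h1
    · exact CharP.char_ne_one k (ringChar k) h1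
    · exact hchar3 h1
  have hjr' : jfun r - 1 ≠ 0 := sub_ne_zero.mpr hjr
  have hjs' : jfun s - 1 ≠ 0 := sub_ne_zero.mpr hjs
  have har : jfun (circOp r) = jfun r / (jfun r - 1) :=
    jcirc h2 h3 r hr0 hr1 hrm1 hr2 hrh
  have has : jfun (circOp s) = jfun s / (jfun s - 1) :=
    jcirc h2 h3 s hs0 hs1 hsm1 hs2 hsh
  have hfact : y - x + 1 = (jfun r - 1) * (jfun s - 1) := by
    rw [hx, hy]; ring
  have hne : y - x + 1 ≠ 0 := hfact ▸ mul_ne_zero hjr' hjs'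
  refine ⟨hfact, hne, ?_, har⟩
  unfold tauInv
  rw [har, has]
  apply Prod.ext <;> simp only
  · rw [hfact, hx, hy]
    field_simp
    ring
  · rw [hfact, hy]
    field_simp
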